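/- Assume N = 1, and let S be an arbitrary invertible 2×2 complex matrix, with ξ₁ and ϑ₁ defined via S as in the context. Then (i) an element ω ∈ Ω satisfies dω = 0 if and only if ω ∼ a + Σ_α ξ₁^α a_α + Σ_α ϑ₁^α b_α + Θ₁₁ b for some complex numbers a, a₁, a₂, b₁, b₂, b; and (ii) such a combination is ∼ 0 if and only if a = a₁ = a₂ = b₁ = b₂ = b = 0. In other words, {[1], [ξ₁¹], [ξ₁²], [ϑ₁¹], [ϑ₁²], [Θ₁₁]} is a complete set of independent cohomology classes of d for N = 1. -/

import Mathlib

/-!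
D = 3 supersymmetry algebra cohomology.
`R3 N = ℂ[ψ₁,…,ψ_N, χ₁,…,χ_N]`, `Om3 N` is the free module with basis
`{1, c̃₁, c̃₂, c̃₃, c̃₁c̃₂, c̃₁c̃₃, c̃₂c̃₃, c̃₁c̃₂c̃₃}` (components 0,…,7), and
`d3` is the odd superderivation with `dc̃₁ = P`, `dc̃₂ = Q`, `dc̃₃ = S`, `d|_R = 0`.
-/

open MvPolynomial

noncomputable section

/-- The polynomial ring `ℂ[ψ₁,…,ψ_N, χ₁,…,χ_N]`; `Sum.inl i ↦ ψᵢ`, `Sum.inr i ↦ χᵢ`. -/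
abbrev R3 (N : ℕ) : Type := MvPolynomial (Fin N ⊕ Fin N) ℂ

/-- `Ω`: free `R3`-module with basis
`{1, c̃₁, c̃₂, c̃₃, c̃₁c̃₂, c̃₁c̃₃, c̃₂c̃₃, c̃₁c̃₂c̃₃}` (components 0,…,7). -/
abbrev Om3 (N : ℕ) : Type := Fin 8 → R3 N

/-- The ghost `ψᵢ`. -/
def ψ {N : ℕ} (i : Fin N) : R3 N := X (Sum.inl i)

/-- The ghost `χᵢ`. -/
def χ {N : ℕ} (i : Fin N) : R3 N := X (Sum.inr i)

/-- `P = Σ ψᵢ²`. -/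
def PP (N : ℕ) : R3 N := ∑ i, ψ i ^ 2

/-- `Q = Σ χᵢ²`. -/
def QQ (N : ℕ) : R3 N := ∑ i, χ i ^ 2

/-- `S = Σ ψᵢχᵢ`. -/
def SS (N : ℕ) : R3 N := ∑ i, ψ i * χ i

/-- The differential: the unique R-linear odd superderivation with
`dc̃₁ = P`, `dc̃₂ = Q`, `dc̃₃ = S` and `d|_R = 0`, written out in components:
`d(ω₀ + c̃₁ω₁ + c̃₂ω₂ + c̃₃ω₃ + c̃₁c̃₂ω₄ + c̃₁c̃₃ω₅ + c̃₂c̃₃ω₆ + c̃₁c̃₂c̃₃ω₇)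
 = Pω₁ + Qω₂ + Sω₃ + (Pc̃₂ − Qc̃₁)ω₄ + (Pc̃₃ − Sc̃₁)ω₅ + (Qc̃₃ − Sc̃₂)ω₆
   + (Pc̃₂c̃₃ − Qc̃₁c̃₃ + Sc̃₁c̃₂)ω₇`. -/
def d3 {N : ℕ} (ω : Om3 N) : Om3 N :=
  ![PP N * ω 1 + QQ N * ω 2 + SS N * ω 3,
    -(QQ N * ω 4) - SS N * ω 5,
    PP N * ω 4 - SS N * ω 6,
    PP N * ω 5 + QQ N * ω 6,
    SS N * ω 7,
    -(QQ N * ω 7),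
    PP N * ω 7,
    0]

/-- Embedding of `R` into `Ω` (coefficient of the basis element `1`). -/
def ofR3 {N : ℕ} (r : R3 N) : Om3 N := ![r, 0, 0, 0, 0, 0, 0, 0]

/-- `ω ∼ ω'` iff `ω − ω' = dρ` for some `ρ`. -/
def Equiv3 {N : ℕ} (ω ω' : Om3 N) : Prop := ∃ ρ, ω - ω' = d3 ρ

/-- The invariant `ξᵢ·ξⱼ = ψᵢχⱼ − χᵢψⱼ`. -/
def xidot {N : ℕ} (i j : Fin N) : R3 N := ψ i * χ j - χ i * ψ j

/-- `Θᵢⱼ = i(c̃₃(ψᵢχⱼ + ψⱼχᵢ) − c̃₁χᵢχⱼ − c̃₂ψᵢψⱼ)` as an element of `Ω`. -/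
def Theta {N : ℕ} (i j : Fin N) : Om3 N :=
  ![0,
    -(C Complex.I * (χ i * χ j)),
    -(C Complex.I * (ψ i * ψ j)),
    C Complex.I * (ψ i * χ j + ψ j * χ i),
    0, 0, 0, 0]

/-- The supersymmetry ghost `ξᵢ = (ψᵢ, iχᵢ)·S⁻¹` (row spinor, entries in `R`). -/
def xi3 {N : ℕ} (S : Matrix (Fin 2) (Fin 2) ℂ) (i : Fin N) (α : Fin 2) : R3 N :=
  C (S⁻¹ 0 α) * ψ i + C (Complex.I * S⁻¹ 1 α) * χ i

/-- `ϑᵢ = (i(c̃₃ψᵢ − c̃₁χᵢ), c̃₃χᵢ − c̃₂ψᵢ)·S⁻¹` (row spinor, entries in `Ω`). -/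
def theta3 {N : ℕ} (S : Matrix (Fin 2) (Fin 2) ℂ) (i : Fin N) (α : Fin 2) : Om3 N :=
  ![0,
    -(C (Complex.I * S⁻¹ 0 α) * χ i),
    -(C (S⁻¹ 1 α) * ψ i),
    C (Complex.I * S⁻¹ 0 α) * ψ i + C (S⁻¹ 1 α) * χ i,
    0, 0, 0, 0]

/-!
For `N = 1`, `d` is the Koszul differential of `(ψ², χ², ψχ)` on `ℂ[ψ, χ]`. Since `ψ` and `χ` are
non-associated primes, its syzygies are found by unique factorisation: a cocycle has no
`c̃₁c̃₂c̃₃`-part, its ghost-number-two part is `d(u c̃₁c̃₂c̃₃)`, and its ghost-number-one part is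
`f ϑ¹ + g ϑ²` (at `S = 1`). Modulo coboundaries every polynomial coefficient may be replaced by its
constant term, except that `χ ϑ¹` and `ψ ϑ²` survive as multiples of `Θ₁₁`. Conversely, the
components of ghost number at most one of a coboundary lie in `(ψ, χ)²`, which separates the six
classes. For general `S`, the ghosts `ξ` and `ϑ` are those at `S = 1` multiplied by `S⁻¹`.
-/

open scoped Matrix

open Complex

section Syzygy

variable {A : Type*} [CommRing A] [IsDomain A] {x y a b c : A}

theorem exists_eq_mul_of_mul_eq_mul_of_prime (hx : Prime x) (hxy : ¬ x ∣ y)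
    (h : y * a = x * b) : ∃ t, a = x * t ∧ b = y * t := by
  obtain ⟨t, rfl⟩ := (hx.dvd_or_dvd ⟨b, h⟩).resolve_left hxy
  exact ⟨t, rfl, mul_left_cancel₀ hx.ne_zero (by linear_combination -h)⟩

theorem syzygy_sq_sq_mul (hx : Prime x) (hy : Prime y) (hxy : ¬ x ∣ y) (hyx : ¬ y ∣ x)
    (h : x ^ 2 * a + y ^ 2 * b + x * y * c = 0) :
    ∃ f g, a = y * f ∧ b = x * g ∧ c = -(x * f) - y * g := by
  obtain ⟨g, hb, hg⟩ := exists_eq_mul_of_mul_eq_mul_of_prime hx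
    (fun h ↦ hxy (hx.dvd_of_dvd_pow h))
    (show y ^ 2 * b = x * (-(x * a) - y * c) by linear_combination h)
  obtain ⟨f, ha, hf⟩ := exists_eq_mul_of_mul_eq_mul_of_prime hy hyx
    (show x * a = y * (-c - y * g) by linear_combination -hg)
  exact ⟨f, g, ha, hb, by linear_combination -hf⟩

theorem second_syzygy_sq_sq_mul (hx : Prime x) (hy : Prime y) (hxy : ¬ x ∣ y)
    (hyx : ¬ y ∣ x) (h₁ : -(y ^ 2 * a) - x * y * b = 0) (h₂ : x ^ 2 * a - x * y * c = 0) :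
    ∃ u, a = x * y * u ∧ b = -(y ^ 2 * u) ∧ c = x ^ 2 * u := by
  have h₁' : y * a = x * -b := mul_left_cancel₀ hy.ne_zero (by linear_combination -h₁)
  have h₂' : x * a = y * c := mul_left_cancel₀ hx.ne_zero (by linear_combination h₂)
  obtain ⟨t, rfl, hb⟩ := exists_eq_mul_of_mul_eq_mul_of_prime hx hxy h₁'
  obtain ⟨u, rfl, rfl⟩ := exists_eq_mul_of_mul_eq_mul_of_prime hy
    (fun h ↦ hyx (hy.dvd_of_dvd_pow h)) (show x ^ 2 * t = y * c by linear_combination h₂')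
  exact ⟨u, by ring, by linear_combination -hb, rfl⟩

end Syzygy

section Differential

variable {N : ℕ}

def d3Linear (N : ℕ) : Om3 N →ₗ[R3 N] Om3 N where
  toFun := d3
  map_add' ω ω' := by funext k; fin_cases k <;> simp [d3] <;> ring
  map_smul' r ω := by funext k; fin_cases k <;> simp [d3] <;> ring

@[simp] theorem d3Linear_apply (ω : Om3 N) : d3Linear N ω = d3 ω := rfl

abbrev coboundaries (N : ℕ) : Submodule (R3 N) (Om3 N) := LinearMap.range (d3Linear N)

theorem equiv3_iff_sub_mem {ω ω' : Om3 N} : Equiv3 ω ω' ↔ ω - ω' ∈ coboundaries N := by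
  simp [Equiv3, eq_comm]

theorem d3_d3 (ω : Om3 N) : d3 (d3 ω) = 0 := by
  funext k; fin_cases k <;> simp [d3] <;> ring

theorem d3_eq_zero_of_equiv3 {ω ω' : Om3 N} (h : Equiv3 ω ω') (hω' : d3 ω' = 0) :
    d3 ω = 0 := by
  obtain ⟨ρ, hρ⟩ := h
  rw [← sub_add_cancel ω ω', hρ, ← d3Linear_apply, map_add, d3Linear_apply, d3Linear_apply,
    d3_d3, hω', add_zero]

theorem prime_ψ (i : Fin N) : Prime (ψ i) := X_prime

theorem prime_χ (i : Fin N) : Prime (χ i) := X_prime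

theorem not_ψ_dvd_χ (i j : Fin N) : ¬ ψ i ∣ χ j := by simp [ψ, χ, X_dvd_X]

theorem not_χ_dvd_ψ (i j : Fin N) : ¬ χ i ∣ ψ j := by simp [ψ, χ, X_dvd_X]

theorem xi3_one_zero (i : Fin N) : xi3 1 i 0 = ψ i := by simp [xi3]

theorem xi3_one_one (i : Fin N) : xi3 1 i 1 = C I * χ i := by simp [xi3]

end Differential

section SingleGhost

theorem PP_one : PP 1 = ψ 0 ^ 2 := by simp [PP]

theorem QQ_one : QQ 1 = χ 0 ^ 2 := by simp [QQ]

theorem SS_one : SS 1 = ψ 0 * χ 0 := by simp [SS]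

theorem C_I_mul_C_I : (C I : R3 1) * C I = -1 := by rw [← C_mul, I_mul_I, C_neg, C_1]

theorem exists_eq_C_add_ψ_mul_add_χ_mul (p : R3 1) :
    ∃ c p₁ p₂, p = C c + ψ 0 * p₁ + χ 0 * p₂ := by
  induction p using MvPolynomial.induction_on with
  | C c => exact ⟨c, 0, 0, by simp⟩
  | add p q hp hq =>
    obtain ⟨c, p₁, p₂, rfl⟩ := hp
    obtain ⟨c', q₁, q₂, rfl⟩ := hq
    exact ⟨c + c', p₁ + q₁, p₂ + q₂, by rw [C_add]; ring⟩
  | mul_X p i hp =>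
    obtain ⟨c, p₁, p₂, rfl⟩ := hp
    rcases i with i | i <;> obtain rfl := Subsingleton.elim i 0
    · exact ⟨0, C c + ψ 0 * p₁ + χ 0 * p₂, 0, by simp [ψ]; ring⟩
    · exact ⟨0, 0, C c + ψ 0 * p₁ + χ 0 * p₂, by simp [χ]; ring⟩

local notation "ϑ" => theta3 (1 : Matrix (Fin 2) (Fin 2) ℂ) (0 : Fin 1)
local notation "Θ" => (Theta (0 : Fin 1) 0 : Om3 1)

theorem exists_eq_ofR3_add_smul_theta3_of_d3_eq_zero {ω : Om3 1} (hω : d3 ω = 0) :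
    ∃ (p f g u : R3 1),
      ω = ofR3 p + f • ϑ 0 + g • ϑ 1 + d3 ![0, 0, 0, 0, 0, 0, 0, u] := by
  have hd k := congrFun hω k
  have h₀ := hd 0
  have h₁ := hd 1
  have h₂ := hd 2
  have h₄ := hd 4
  simp only [d3, PP_one, QQ_one, SS_one, Matrix.cons_val, Pi.zero_apply] at h₀ h₁ h₂ h₄
  have hx := prime_ψ (0 : Fin 1)
  have hy := prime_χ (0 : Fin 1)
  have h₇ : ω 7 = 0 := (mul_eq_zero.mp h₄).resolve_left (mul_ne_zero hx.ne_zero hy.ne_zero)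
  obtain ⟨u, h₄, h₅, h₆⟩ :=
    second_syzygy_sq_sq_mul hx hy (not_ψ_dvd_χ 0 0) (not_χ_dvd_ψ 0 0) h₁ h₂
  obtain ⟨f, g, h₁, h₂, h₃⟩ := syzygy_sq_sq_mul hx hy (not_ψ_dvd_χ 0 0) (not_χ_dvd_ψ 0 0) h₀
  refine ⟨ω 0, C I * f, -g, u, funext fun k ↦ ?_⟩
  fin_cases k <;>
    simp [d3, ofR3, theta3, PP_one, QQ_one, SS_one, h₁, h₂, h₃, h₄, h₅, h₆, h₇]
  · linear_combination (f * χ 0) * C_I_mul_C_I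
  · ring
  · linear_combination -(f * ψ 0) * C_I_mul_C_I

theorem exists_ofR3_sub_ofR3_mem (p : R3 1) :
    ∃ a b c : ℂ, ofR3 p - ofR3 (C a + C b * ψ 0 + C c * χ 0) ∈ coboundaries 1 := by
  obtain ⟨a, p₁, p₂, rfl⟩ := exists_eq_C_add_ψ_mul_add_χ_mul p
  obtain ⟨b, p₁₁, p₁₂, rfl⟩ := exists_eq_C_add_ψ_mul_add_χ_mul p₁
  obtain ⟨c, p₂₁, p₂₂, rfl⟩ := exists_eq_C_add_ψ_mul_add_χ_mul p₂
  refine ⟨a, b, c, ![0, p₁₁, p₂₂, p₁₂ + p₂₁, 0, 0, 0, 0], funext fun k ↦ ?_⟩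
  fin_cases k <;> simp [d3, ofR3, PP_one, QQ_one, SS_one]
  ring

theorem exists_smul_Theta_sub_smul_Theta_mem (h : R3 1) :
    ∃ c : ℂ, h • Θ - (C c : R3 1) • Θ ∈ coboundaries 1 := by
  obtain ⟨c, h₁, h₂, rfl⟩ := exists_eq_C_add_ψ_mul_add_χ_mul h
  refine ⟨c, ![0, 0, 0, 0, C I * (χ 0 * h₂ - ψ 0 * h₁), 2 * C I * χ 0 * h₁,
    2 * C I * ψ 0 * h₂, 0], funext fun k ↦ ?_⟩
  fin_cases k <;> simp [d3, Theta, PP_one, QQ_one, SS_one] <;> ring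

theorem exists_smul_theta3_add_smul_theta3_sub_mem (f g : R3 1) :
    ∃ (u v : ℂ) (h : R3 1),
      f • ϑ 0 + g • ϑ 1 - ((C u : R3 1) • ϑ 0 + (C v : R3 1) • ϑ 1 + h • Θ) ∈ coboundaries 1 := by
  obtain ⟨u, f₁, f₂, rfl⟩ := exists_eq_C_add_ψ_mul_add_χ_mul f
  obtain ⟨v, g₁, g₂, rfl⟩ := exists_eq_C_add_ψ_mul_add_χ_mul g
  -- `Θ = χ ϑ¹ + i ψ ϑ²`, while `i χ ϑ¹ + ψ ϑ² = -d c̃₁c̃₂`.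
  refine ⟨u, v, C (1 / 2) * (f₂ - C I * g₁),
    ![0, 0, 0, 0, -(C (1 / 2) * (g₁ - C I * f₂)), C I * f₁, g₂, 0], funext fun k ↦ ?_⟩
  have h2 : (C 2⁻¹ : R3 1) * 2 = 1 := by
    rw [← map_ofNat C, ← C_mul, inv_mul_cancel₀ two_ne_zero, C_1]
  fin_cases k <;> simp [d3, theta3, Theta, PP_one, QQ_one, SS_one] <;> grind [C_I_mul_C_I]

def cohomRep (S : Matrix (Fin 2) (Fin 2) ℂ) (a : ℂ) (a' b' : Fin 2 → ℂ) (b : ℂ) : Om3 1 :=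
  ofR3 (C a + xi3 S 0 0 * C (a' 0) + xi3 S 0 1 * C (a' 1))
    + (C (b' 0) : R3 1) • theta3 S 0 0 + (C (b' 1) : R3 1) • theta3 S 0 1 + (C b : R3 1) • Θ

theorem d3_cohomRep (S : Matrix (Fin 2) (Fin 2) ℂ) (a : ℂ) (a' b' : Fin 2 → ℂ) (b : ℂ) :
    d3 (cohomRep S a a' b' b) = 0 := by
  funext k
  fin_cases k <;> simp [d3, cohomRep, ofR3, theta3, Theta, PP_one, QQ_one, SS_one]
  ring

theorem cohomRep_eq_cohomRep_one (S : Matrix (Fin 2) (Fin 2) ℂ) (a : ℂ) (a' b' : Fin 2 → ℂ)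
    (b : ℂ) : cohomRep S a a' b' b = cohomRep 1 a (S⁻¹ *ᵥ a') (S⁻¹ *ᵥ b') b := by
  funext k
  fin_cases k <;> simp [cohomRep, ofR3, theta3, xi3, Matrix.mulVec, dotProduct] <;> ring

theorem cohomRep_mulVec {S : Matrix (Fin 2) (Fin 2) ℂ} (hS : IsUnit S.det) (a : ℂ)
    (a' b' : Fin 2 → ℂ) (b : ℂ) : cohomRep S a (S *ᵥ a') (S *ᵥ b') b = cohomRep 1 a a' b' b := by
  rw [cohomRep_eq_cohomRep_one, Matrix.mulVec_mulVec, Matrix.mulVec_mulVec,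
    Matrix.nonsing_inv_mul S hS, Matrix.one_mulVec, Matrix.one_mulVec]

theorem exists_sub_cohomRep_mem {ω : Om3 1} (hω : d3 ω = 0) :
    ∃ a a' b' b, ω - cohomRep 1 a a' b' b ∈ coboundaries 1 := by
  obtain ⟨p, f, g, u, rfl⟩ := exists_eq_ofR3_add_smul_theta3_of_d3_eq_zero hω
  obtain ⟨a, a₁, a₂, hp⟩ := exists_ofR3_sub_ofR3_mem p
  obtain ⟨b₁, b₂, h, hfg⟩ := exists_smul_theta3_add_smul_theta3_sub_mem f g
  obtain ⟨b, hh⟩ := exists_smul_Theta_sub_smul_Theta_mem h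
  have hξ : (C a + xi3 1 0 0 * C a₁ + xi3 1 0 1 * C (-I * a₂) : R3 1)
      = C a + C a₁ * ψ 0 + C a₂ * χ 0 := by
    have hI : (C I : R3 1) * C (-I * a₂) = C a₂ := by
      rw [← C_mul, ← mul_assoc, mul_neg, I_mul_I, neg_neg, one_mul]
    rw [xi3_one_zero, xi3_one_one]
    linear_combination χ 0 * hI
  refine ⟨a, ![a₁, -I * a₂], ![b₁, b₂], b, ?_⟩
  convert add_mem (add_mem (add_mem hp hfg) hh)
    (LinearMap.mem_range_self (d3Linear 1) ![0, 0, 0, 0, 0, 0, 0, u]) using 1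
  simp only [cohomRep, Matrix.cons_val_zero, Matrix.cons_val_one, hξ, d3Linear_apply]
  abel

theorem eq_zero_of_cohomRep_mem {a b : ℂ} {a' b' : Fin 2 → ℂ}
    (h : cohomRep 1 a a' b' b ∈ coboundaries 1) : a = 0 ∧ a' = 0 ∧ b' = 0 ∧ b = 0 := by
  obtain ⟨ρ, hρ⟩ := h
  have e₀ : ψ 0 ^ 2 * ρ 1 + χ 0 ^ 2 * ρ 2 + ψ 0 * χ 0 * ρ 3
      = C a + ψ 0 * C (a' 0) + C I * χ 0 * C (a' 1) := by
    simpa [d3, cohomRep, ofR3, theta3, Theta, PP_one, QQ_one, SS_one, xi3_one_zero,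
      xi3_one_one] using congrFun hρ 0
  have e₁ : -(χ 0 ^ 2 * ρ 4) - ψ 0 * χ 0 * ρ 5
      = -(C (b' 0) * (C I * χ 0)) - C b * (C I * (χ 0 * χ 0)) := by
    simpa [d3, cohomRep, ofR3, theta3, Theta, QQ_one, SS_one, sub_eq_add_neg] using congrFun hρ 1
  have e₂ : ψ 0 ^ 2 * ρ 4 - ψ 0 * χ 0 * ρ 6
      = -(C (b' 1) * ψ 0) - C b * (C I * (ψ 0 * ψ 0)) := by
    simpa [d3, cohomRep, ofR3, theta3, Theta, PP_one, SS_one, sub_eq_add_neg] using congrFun hρ 2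
  have ha : a = 0 := by simpa [ψ, χ] using (congrArg constantCoeff e₀).symm
  have ha₀ : a' 0 = 0 := by
    simpa [ψ, χ, pderiv_X] using (congrArg (constantCoeff ∘ pderiv (Sum.inl 0)) e₀).symm
  have ha₁ : a' 1 = 0 := by
    simpa [ψ, χ, pderiv_X] using congrArg (constantCoeff ∘ pderiv (Sum.inr 0)) e₀
  have hb₀ : b' 0 = 0 := by
    simpa [ψ, χ, pderiv_X] using congrArg (constantCoeff ∘ pderiv (Sum.inr 0)) e₁
  have hb₁ : b' 1 = 0 := by
    simpa [ψ, χ, pderiv_X] using congrArg (constantCoeff ∘ pderiv (Sum.inl 0)) e₂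
  -- `Θ` has equal second derivatives `∂_χ²` of its `c̃₁`- and `∂_ψ²` of its `c̃₂`-component,
  -- while on a coboundary `dρ` they are `-2 ρ₄(0)` and `2 ρ₄(0)`.
  have hρ₁ : constantCoeff (ρ 4) = I * b := by
    have := congrArg (constantCoeff ∘ pderiv (Sum.inr 0) ∘ pderiv (Sum.inr 0)) e₁
    simp [ψ, χ, pderiv_X, map_ofNat] at this
    linear_combination this / 2
  have hρ₂ : constantCoeff (ρ 4) = -(I * b) := by
    have := congrArg (constantCoeff ∘ pderiv (Sum.inl 0) ∘ pderiv (Sum.inl 0)) e₂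
    simp [ψ, χ, pderiv_X, map_ofNat] at this
    linear_combination this / 2
  refine ⟨ha, funext fun k ↦ ?_, funext fun k ↦ ?_, ?_⟩
  · fin_cases k
    exacts [ha₀, ha₁]
  · fin_cases k
    exacts [hb₀, hb₁]
  · have h4 : b * (I * 2) = 0 := by linear_combination hρ₂ - hρ₁
    simpa [I_ne_zero] using h4

end SingleGhost

/-- for `N = 1` and any invertible `S` (equivalent spinor
representation), (i) `dω = 0` iff
`ω ∼ a + Σ_α ξ₁^α a_α + Σ_α ϑ₁^α b_α + Θ₁₁ b` with complex coefficients;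
(ii) such a combination is `∼ 0` iff all six coefficients vanish.
I.e. `{[1], [ξ₁¹], [ξ₁²], [ϑ₁¹], [ϑ₁²], [Θ₁₁]}` is a complete set of independent
cohomology classes of `d` for `N = 1`. -/
theorem stmt9 (S : Matrix (Fin 2) (Fin 2) ℂ) (hS : IsUnit S.det) :
    (∀ ω : Om3 1, d3 ω = 0 ↔
      ∃ a a1 a2 b1 b2 b : ℂ,
        Equiv3 ω
          (ofR3 (C a + xi3 S 0 0 * C a1 + xi3 S 0 1 * C a2)
            + (C b1 : R3 1) • theta3 S 0 0 + (C b2 : R3 1) • theta3 S 0 1 + (C b : R3 1) • Theta 0 0))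
    ∧
    (∀ a a1 a2 b1 b2 b : ℂ,
      Equiv3
        ((ofR3 (C a + xi3 S 0 0 * C a1 + xi3 S 0 1 * C a2)
          + (C b1 : R3 1) • theta3 S 0 0 + (C b2 : R3 1) • theta3 S 0 1 + (C b : R3 1) • Theta 0 0 : Om3 1)) 0 ↔
      (a = 0 ∧ a1 = 0 ∧ a2 = 0 ∧ b1 = 0 ∧ b2 = 0 ∧ b = 0)) := by
  have hinj : ∀ v : Fin 2 → ℂ, S⁻¹ *ᵥ v = 0 → v = 0 := fun v hv ↦ by
    rw [← Matrix.one_mulVec v, ← Matrix.mul_nonsing_inv S hS, ← Matrix.mulVec_mulVec, hv,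
      Matrix.mulVec_zero]
  refine ⟨fun ω ↦ ⟨fun hω ↦ ?_, fun ⟨a, a₁, a₂, b₁, b₂, b, h⟩ ↦ ?_⟩, fun a a₁ a₂ b₁ b₂ b ↦ ?_⟩
  · obtain ⟨a, a', b', b, h⟩ := exists_sub_cohomRep_mem hω
    refine ⟨a, (S *ᵥ a') 0, (S *ᵥ a') 1, (S *ᵥ b') 0, (S *ᵥ b') 1, b, equiv3_iff_sub_mem.2 ?_⟩
    rwa [← cohomRep_mulVec hS] at h
  · exact d3_eq_zero_of_equiv3 h (d3_cohomRep S a ![a₁, a₂] ![b₁, b₂] b)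
  · change Equiv3 (cohomRep S a ![a₁, a₂] ![b₁, b₂] b) 0 ↔ _
    rw [equiv3_iff_sub_mem, sub_zero]
    refine ⟨fun h ↦ ?_, ?_⟩
    · rw [cohomRep_eq_cohomRep_one] at h
      obtain ⟨rfl, ha, hb, rfl⟩ := eq_zero_of_cohomRep_mem h
      simpa [and_assoc] using And.intro (hinj _ ha) (hinj _ hb)
    · rintro ⟨rfl, rfl, rfl, rfl, rfl, rfl⟩
      convert (coboundaries 1).zero_mem
      funext k
      fin_cases k <;> simp [cohomRep, ofR3]
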